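/- arXiv:1909.04483 — 2 statements merged into one kernel-verified Lean document; each statement's English description precedes it below -/
import Mathlib

section
/- Let X be a length space, I ⊆ ℝ a nondegenerate interval, c > 0, and for each j ∈ ℕ let f_j : I → ℝ be a bounded continuous function with f_j(t) ≥ c for all t ∈ I. Assume the sequence (f_j) converges uniformly on I to a (necessarily continuous, bounded, ≥ c) function f_∞. Then the null distances converge pointwise: for all p, q ∈ I × X, lim_{j→∞} d̂_{f_j}(p,q) = d̂_{f_∞}(p,q), where d̂_{f_j} and d̂_{f_∞} are the null distances of the warped products I ×_{f_j} X and I ×_{f_∞} X. -/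
open MeasureTheory

/-- Causal relation of the warped product `I ×_f X`: `(s,x) ≼_f (t,y)` iff `s ≤ t` and
`d(x,y) ≤ ∫_s^t f(u)⁻¹ du`. -/
def WPCausal {X : Type*} [MetricSpace X] (f : ℝ → ℝ) (p q : ℝ × X) : Prop :=
  p.1 ≤ q.1 ∧
    ENNReal.ofReal (dist p.2 q.2) ≤ ∫⁻ u in Set.Ioc p.1 q.1, ENNReal.ofReal ((f u)⁻¹)

/-- `σ` is a piecewise causal chain with `n+1` segments from `p` to `q` inside `I × X`. -/
def WPChain {X : Type*} [MetricSpace X] (I : Set ℝ) (f : ℝ → ℝ) (p q : ℝ × X) (n : ℕ)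
    (σ : ℕ → ℝ × X) : Prop :=
  σ 0 = p ∧ σ (n + 1) = q ∧ (∀ i ≤ n + 1, (σ i).1 ∈ I) ∧
    ∀ i ≤ n, WPCausal f (σ i) (σ (i + 1)) ∨ WPCausal f (σ (i + 1)) (σ i)

/-- The null distance of the warped product `I ×_f X`. -/
noncomputable def nullDist {X : Type*} [MetricSpace X] (I : Set ℝ) (f : ℝ → ℝ)
    (p q : ℝ × X) : ℝ :=
  sInf { r | ∃ n σ, WPChain I f p q n σ ∧
    r = ∑ i ∈ Finset.range (n + 1), |(σ (i + 1)).1 - (σ i).1| }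

/-!
Let `c ≤ f, g ≤ M` and `|f - g| ≤ δ c` on `I`, with `δ ≤ 1`. An `f`-causal step from `(s, x)` to
`(t, y)` has `d(x, y) ≤ (1 + δ) B`, where `B = ∫ₛᵗ g⁻¹ ≤ (t - s) / c` is the conformal time of
`g`. Replace it by a `g`-causal step to a point `(t, w)` with `d(x, w) ≤ B`, followed by a zigzag
`(t, w) ≽ (r, w') ≼ (t, y)`; in a length space such a zigzag moves a point by `D` at a cost of
about `M D`, and here `D ≤ δ B`. So every `f`-chain yields a `g`-chain that is longer by at most
the factor `1 + δ M / c` (plus an arbitrarily small error), i.e. `d̂_g ≤ (1 + δ M / c) d̂_f`.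
Exchanging `f` and `g` and letting `δ → 0` squeezes `d̂_{f_j}` to `d̂_{f_∞}`.
Since `I` is nondegenerate, zigzags between two fixed slices join any two points, so the
infima defining the null distances are taken over nonempty sets.
-/

open Set Filter Topology
open scoped ENNReal

/-- The defining property of a length space in the sense used here. -/
def HasApproxMidpoints (X : Type*) [MetricSpace X] : Prop :=
  ∀ x y : X, ∀ ε : ℝ, 0 < ε → ∃ z : X, max (dist x z) (dist z y) ≤ dist x y / 2 + ε

namespace HasApproxMidpoints

variable {X : Type*} [MetricSpace X]

theorem rel_of_dist_lt (hX : HasApproxMidpoints X) {R : X → X → Prop}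
    (htrans : ∀ x y z, R x y → R y z → R x z) {ρ : ℝ} (hρ : 0 < ρ)
    (hR : ∀ x y, dist x y < ρ → R x y) (x y : X) : R x y := by
  have hpow : ∀ n : ℕ, ∀ x y : X, dist x y < 2 ^ n * ρ → R x y := by
    intro n
    induction n with
    | zero => simpa using hR
    | succ n ih =>
      intro x y hxy
      obtain ⟨m, hm⟩ := hX x y ((2 ^ (n + 1) * ρ - dist x y) / 4) (by linarith)
      have hhalf : dist x y / 2 + (2 ^ (n + 1) * ρ - dist x y) / 4 < 2 ^ n * ρ := by
        rw [pow_succ] at hxy ⊢; linarith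
      exact htrans x m y (ih x m (by linarith [le_max_left (dist x m) (dist m y)]))
        (ih m y (by linarith [le_max_right (dist x m) (dist m y)]))
  obtain ⟨n, hn⟩ := pow_unbounded_of_one_lt (dist x y / ρ) one_lt_two
  exact hpow n x y (by rwa [div_lt_iff₀ hρ] at hn)

theorem exists_dist_le_sub_add_div_pow (hX : HasApproxMidpoints X) (n : ℕ) :
    ∀ (x y : X) {α ε : ℝ}, 0 ≤ α → α ≤ dist x y → 0 < ε →
      ∃ w, dist x w ≤ α ∧ dist w y ≤ dist x y - α + dist x y / 2 ^ n + ε := by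
  induction n with
  | zero =>
    intro x y α ε hα _ hε
    exact ⟨x, by simpa using hα, by simp only [pow_zero, div_one]; linarith⟩
  | succ n ih =>
    intro x y α ε hα hαxy hε
    obtain ⟨m, hm⟩ := hX x y (ε / 6) (by positivity)
    have hxm := (le_max_left _ _).trans hm
    have hmy := (le_max_right _ _).trans hm
    have hhalf : ∀ z, z ≤ dist x y / 2 + ε / 6 →
        z / 2 ^ n ≤ dist x y / 2 ^ (n + 1) + ε / 6 := by
      intro z hz
      calc z / 2 ^ n ≤ (dist x y / 2 + ε / 6) / 2 ^ n := by gcongr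
        _ = dist x y / 2 ^ (n + 1) + ε / 6 / 2 ^ n := by rw [pow_succ]; ring
        _ ≤ dist x y / 2 ^ (n + 1) + ε / 6 :=
          add_le_add_right
            (div_le_self (by positivity : (0 : ℝ) ≤ ε / 6) (one_le_pow₀ one_le_two)) _
    rcases le_total α (dist x m) with h | h
    · obtain ⟨w, hxw, hwm⟩ := ih x m hα h (half_pos hε)
      exact ⟨w, hxw, by linarith [dist_triangle w m y, hhalf _ hxm]⟩
    · obtain ⟨w, hmw, hwy⟩ :=
        ih m y (sub_nonneg.2 h) (by linarith [dist_triangle x m y]) (half_pos hε)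
      exact ⟨w, by linarith [dist_triangle x m w], by linarith [hhalf _ hmy]⟩

theorem exists_dist_le_sub_add (hX : HasApproxMidpoints X) (x y : X) {α ε : ℝ} (hα : 0 ≤ α)
    (hαxy : α ≤ dist x y) (hε : 0 < ε) :
    ∃ w, dist x w ≤ α ∧ dist w y ≤ dist x y - α + ε := by
  obtain ⟨n, hn⟩ := pow_unbounded_of_one_lt (2 * dist x y / ε) one_lt_two
  obtain ⟨w, hxw, hwy⟩ := hX.exists_dist_le_sub_add_div_pow n x y hα hαxy (half_pos hε)
  have hsmall : dist x y / 2 ^ n < ε / 2 := by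
    rw [div_lt_iff₀ hε] at hn
    rw [div_lt_iff₀ (by positivity)]
    linarith
  exact ⟨w, hxw, by linarith⟩

end HasApproxMidpoints

/-- `∫ₛᵗ f(u)⁻¹ du`, the conformal time elapsed in `I ×_f X` between the slices `s` and `t`. -/
noncomputable def conformalTime (f : ℝ → ℝ) (s t : ℝ) : ℝ≥0∞ :=
  ∫⁻ u in Ioc s t, ENNReal.ofReal (f u)⁻¹

section ConformalTime

variable {f g : ℝ → ℝ} {s t : ℝ}

theorem ofReal_mul_le_conformalTime {m : ℝ} (h : ∀ u ∈ Ioc s t, m ≤ (g u)⁻¹) :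
    ENNReal.ofReal m * ENNReal.ofReal (t - s) ≤ conformalTime g s t := by
  rw [← Real.volume_Ioc, ← setLIntegral_const]
  exact setLIntegral_mono' measurableSet_Ioc fun u hu => ENNReal.ofReal_le_ofReal (h u hu)

theorem conformalTime_le_ofReal_mul {m : ℝ} (h : ∀ u ∈ Ioc s t, (g u)⁻¹ ≤ m) :
    conformalTime g s t ≤ ENNReal.ofReal m * ENNReal.ofReal (t - s) := by
  rw [← Real.volume_Ioc, ← setLIntegral_const]
  exact setLIntegral_mono' measurableSet_Ioc fun u hu => ENNReal.ofReal_le_ofReal (h u hu)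

theorem conformalTime_le_ofReal_mul_conformalTime {k : ℝ} (hk : 0 ≤ k)
    (h : ∀ u ∈ Ioc s t, (f u)⁻¹ ≤ k * (g u)⁻¹) :
    conformalTime f s t ≤ ENNReal.ofReal k * conformalTime g s t := by
  rw [conformalTime, conformalTime, ← lintegral_const_mul' _ _ ENNReal.ofReal_ne_top]
  refine setLIntegral_mono' measurableSet_Ioc fun u hu => ?_
  rw [← ENNReal.ofReal_mul hk]
  exact ENNReal.ofReal_le_ofReal (h u hu)

theorem exists_ofReal_le_conformalTime {M b : ℝ} (hM : 0 < M) (hb : 0 ≤ b) (hst : s ≤ t)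
    (hg : ∀ u ∈ Ioc s t, 0 < g u) (hgM : ∀ u ∈ Ioc s t, g u ≤ M)
    (hbst : ENNReal.ofReal b ≤ conformalTime g s t) :
    ∃ r ∈ Icc s t, t - r ≤ M * b ∧ ENNReal.ofReal b ≤ conformalTime g r t := by
  rcases le_total s (t - M * b) with h | h
  · refine ⟨t - M * b, ⟨h, by nlinarith⟩, le_of_eq (by ring), ?_⟩
    have hsub : Ioc (t - M * b) t ⊆ Ioc s t := Ioc_subset_Ioc_left h
    calc ENNReal.ofReal b = ENNReal.ofReal M⁻¹ * ENNReal.ofReal (t - (t - M * b)) := by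
          rw [← ENNReal.ofReal_mul (inv_nonneg.2 hM.le)]
          congr 1
          field_simp
          ring
      _ ≤ conformalTime g (t - M * b) t := ofReal_mul_le_conformalTime fun u hu =>
          inv_anti₀ (hg u (hsub hu)) (hgM u (hsub hu))
  · exact ⟨s, ⟨le_rfl, hst⟩, by linarith, hbst⟩

end ConformalTime

section NullLengths

variable {X : Type*} [MetricSpace X] {I : Set ℝ} {f g : ℝ → ℝ} {p q : ℝ × X}

def nullLengths (I : Set ℝ) (f : ℝ → ℝ) (p q : ℝ × X) : Set ℝ :=
  { r | ∃ n σ, WPChain I f p q n σ ∧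
    r = ∑ i ∈ Finset.range (n + 1), |(σ (i + 1)).1 - (σ i).1| }

theorem nonneg_of_mem_nullLengths {L : ℝ} (h : L ∈ nullLengths I f p q) : 0 ≤ L := by
  obtain ⟨n, σ, -, rfl⟩ := h
  exact Finset.sum_nonneg fun i _ => abs_nonneg _

theorem bddBelow_nullLengths : BddBelow (nullLengths I f p q) :=
  ⟨0, fun _ => nonneg_of_mem_nullLengths⟩

theorem nullDist_nonneg : 0 ≤ nullDist I f p q :=
  Real.sInf_nonneg fun _ => nonneg_of_mem_nullLengths

theorem fst_mem_of_nullLengths_nonempty (h : (nullLengths I f p q).Nonempty) : p.1 ∈ I := by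
  obtain ⟨_, n, σ, ⟨hσ0, -, hσI, -⟩, -⟩ := h
  exact hσ0 ▸ hσI 0 (Nat.zero_le _)

theorem abs_sub_mem_nullLengths (hp : p.1 ∈ I) (hq : q.1 ∈ I)
    (h : WPCausal f p q ∨ WPCausal f q p) : |q.1 - p.1| ∈ nullLengths I f p q := by
  refine ⟨0, fun i => if i = 0 then p else q, ⟨rfl, rfl, ?_, ?_⟩, by simp⟩
  · intro i hi
    interval_cases i <;> simpa
  · intro i hi
    interval_cases i
    simpa using h

theorem abs_sub_mem_nullLengths_vertical {t : ℝ} (hp : p.1 ∈ I) (ht : t ∈ I) :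
    |t - p.1| ∈ nullLengths I f p (t, p.2) := by
  refine abs_sub_mem_nullLengths hp ht ?_
  rcases le_total p.1 t with h | h
  · exact Or.inl ⟨h, by simp⟩
  · exact Or.inr ⟨h, by simp⟩

theorem add_mem_nullLengths {r : ℝ × X} {L₁ L₂ : ℝ} (h₁ : L₁ ∈ nullLengths I f p q)
    (h₂ : L₂ ∈ nullLengths I f q r) : L₁ + L₂ ∈ nullLengths I f p r := by
  obtain ⟨n, σ, ⟨hσ0, hσ1, hσI, hσs⟩, rfl⟩ := h₁
  obtain ⟨m, τ, ⟨hτ0, hτ1, hτI, hτs⟩, rfl⟩ := h₂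
  set ρ : ℕ → ℝ × X := fun i => if i ≤ n + 1 then σ i else τ (i - (n + 1))
  have hρσ : ∀ i ≤ n + 1, ρ i = σ i := fun i hi => if_pos hi
  have hρτ : ∀ j, ρ (n + 1 + j) = τ j := by
    intro j
    rcases j with _ | j
    · simp [ρ, hσ1, hτ0]
    · simp [ρ, show ¬ n + 1 + (j + 1) ≤ n + 1 by omega]
  have hρτ' : ∀ i, n + 1 ≤ i → ρ i = τ (i - (n + 1)) := fun i hi => by
    simpa [Nat.add_sub_cancel' hi] using hρτ (i - (n + 1))
  refine ⟨n + 1 + m, ρ, ⟨?_, ?_, fun i hi => ?_, fun i hi => ?_⟩, ?_⟩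
  · rw [hρσ 0 (Nat.zero_le _), hσ0]
  · rw [add_assoc, hρτ, hτ1]
  · rcases le_total i (n + 1) with h | h
    · rw [hρσ i h]; exact hσI i h
    · rw [hρτ' i h]; exact hτI _ (by omega)
  · rcases le_or_gt i n with h | h
    · rw [hρσ i (by omega), hρσ (i + 1) (by omega)]; exact hσs i h
    · rw [hρτ' i (by omega), hρτ' (i + 1) (by omega), show i + 1 - (n + 1) = i - (n + 1) + 1 by omega]
      exact hτs _ (by omega)
  · rw [show n + 1 + m + 1 = (n + 1) + (m + 1) by omega,
      Finset.sum_range_add (fun i => |(ρ (i + 1)).1 - (ρ i).1|) (n + 1) (m + 1)]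
    congr 1
    · refine Finset.sum_congr rfl fun i hi => ?_
      have := Finset.mem_range.mp hi
      rw [hρσ i (by omega), hρσ (i + 1) (by omega)]
    · refine Finset.sum_congr rfl fun j _ => ?_
      rw [add_assoc, hρτ, hρτ]

theorem mem_nullLengths_symm {L : ℝ} (h : L ∈ nullLengths I f p q) :
    L ∈ nullLengths I f q p := by
  obtain ⟨n, σ, ⟨hσ0, hσ1, hσI, hσs⟩, rfl⟩ := h
  refine ⟨n, fun i => σ (n + 1 - i), ⟨by simpa using hσ1, by simpa using hσ0,
    fun i hi => hσI _ (by omega), fun i hi => ?_⟩, ?_⟩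
  · simp only
    rw [show n + 1 - i = n - i + 1 by omega, show n + 1 - (i + 1) = n - i by omega]
    exact (hσs (n - i) (by omega)).symm
  · rw [← Finset.sum_range_reflect]
    refine Finset.sum_congr rfl fun i hi => ?_
    have := Finset.mem_range.mp hi
    rw [show n + 1 - 1 - i + 1 = n + 1 - i by omega, show n + 1 - 1 - i = n + 1 - (i + 1) by omega,
      abs_sub_comm]

end NullLengths

theorem inv_le_one_add_mul_inv {a b c δ : ℝ} (hc : 0 < c) (ha : c ≤ a) (hb : c ≤ b)
    (hab : |a - b| ≤ δ * c) : a⁻¹ ≤ (1 + δ) * b⁻¹ := by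
  have hδ : 0 ≤ δ := nonneg_of_mul_nonneg_left ((abs_nonneg _).trans hab) hc
  rw [← div_eq_mul_inv, le_div_iff₀ (hc.trans_le hb), inv_mul_le_iff₀ (hc.trans_le ha)]
  nlinarith [abs_le.1 hab]

section Comparison

variable {X : Type*} [MetricSpace X] {I : Set ℝ} {f g : ℝ → ℝ} {p q : ℝ × X}

/-- The zigzag `(t, w) ≽ (r, w') ≼ (t, y)` through an approximate midpoint `w'`. -/
theorem two_mul_sub_mem_nullLengths (hX : HasApproxMidpoints X) {r t : ℝ} (hr : r ∈ I)
    (ht : t ∈ I) (hrt : r ≤ t) {w y : X} {b : ℝ} (hwy : dist w y < 2 * b)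
    (hb : ENNReal.ofReal b ≤ conformalTime g r t) :
    2 * (t - r) ∈ nullLengths I g (t, w) (t, y) := by
  obtain ⟨w', hw'⟩ := hX w y (b - dist w y / 2) (by linarith)
  have hcausal : ∀ z, dist w' z ≤ b → WPCausal g (r, w') (t, z) :=
    fun z hz => ⟨hrt, (ENNReal.ofReal_le_ofReal hz).trans hb⟩
  have hdown := abs_sub_mem_nullLengths (f := g) (p := (t, w)) (q := (r, w')) ht hr
    (Or.inr (hcausal w (by rw [dist_comm]; linarith [le_max_left (dist w w') (dist w' y)])))
  have hup := abs_sub_mem_nullLengths (f := g) (p := (r, w')) (q := (t, y)) hr ht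
    (Or.inl (hcausal y (by linarith [le_max_right (dist w w') (dist w' y)])))
  convert add_mem_nullLengths hdown hup using 1
  simp only [abs_sub_comm r t, abs_of_nonneg (sub_nonneg.2 hrt)]
  ring

theorem nullLengths_nonempty (hX : HasApproxMidpoints X) (hIc : I.OrdConnected) {a b : ℝ}
    (ha : a ∈ I) (hb : b ∈ I) (hab : a < b) {M : ℝ} (hg : ∀ u ∈ I, 0 < g u)
    (hgM : ∀ u ∈ I, g u ≤ M) (hp : p.1 ∈ I) (hq : q.1 ∈ I) :
    (nullLengths I g p q).Nonempty := by
  have hM : 0 < M := (hg b hb).trans_le (hgM b hb)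
  have hsub : Ioc a b ⊆ I := Ioc_subset_Icc_self.trans (hIc.out ha hb)
  have hβ : ENNReal.ofReal (M⁻¹ * (b - a)) ≤ conformalTime g a b := by
    rw [ENNReal.ofReal_mul (inv_nonneg.2 hM.le)]
    exact ofReal_mul_le_conformalTime fun u hu => inv_anti₀ (hg u (hsub hu)) (hgM u (hsub hu))
  have hslice : ∀ x y : X, (nullLengths I g (b, x) (b, y)).Nonempty :=
    hX.rel_of_dist_lt (fun _ _ _ ⟨_, h₁⟩ ⟨_, h₂⟩ => ⟨_, add_mem_nullLengths h₁ h₂⟩)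
      (by have := sub_pos.2 hab; positivity)
      fun x y hxy => ⟨_, two_mul_sub_mem_nullLengths hX ha hb hab.le hxy hβ⟩
  obtain ⟨L, hL⟩ := hslice p.2 q.2
  exact ⟨_, add_mem_nullLengths (add_mem_nullLengths (abs_sub_mem_nullLengths_vertical hp hb) hL)
    (mem_nullLengths_symm (abs_sub_mem_nullLengths_vertical hq hb))⟩

/-- A causal step to `(t, w)` covering the conformal time `B`, then a zigzag covering the
excess `D`, dipping no lower than `s` because `D ≤ B`. -/
theorem exists_mem_nullLengths_le_of_dist_le_add (hX : HasApproxMidpoints X)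
    (hIc : I.OrdConnected) {M : ℝ} (hM : 0 < M) (hg : ∀ u ∈ I, 0 < g u)
    (hgM : ∀ u ∈ I, g u ≤ M) {s t : ℝ} {x y : X} (hs : s ∈ I) (ht : t ∈ I) (hst : s ≤ t)
    {B D : ℝ} (hB : ENNReal.ofReal B ≤ conformalTime g s t) (hBxy : B < dist x y)
    (hxy : dist x y ≤ B + D) (hDB : D ≤ B) {η : ℝ} (hη : 0 < η) :
    ∃ L ∈ nullLengths I g (s, x) (t, y), L ≤ t - s + M * D + η := by
  have hsub : Ioc s t ⊆ I := Ioc_subset_Icc_self.trans (hIc.out hs ht)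
  set ε := min (η / (2 * M)) (B / 2)
  have hε : 0 < ε := lt_min (by positivity) (by linarith)
  have hMε : M * ε ≤ η / 2 := by
    calc M * ε ≤ M * (η / (2 * M)) := by gcongr; exact min_le_left _ _
      _ = η / 2 := by field_simp
  obtain ⟨w, hxw, hwy⟩ := hX.exists_dist_le_sub_add x y (by linarith) hBxy.le hε
  obtain ⟨r, ⟨hsr, hrt⟩, htr, hr⟩ := exists_ofReal_le_conformalTime (b := D / 2 + ε) hM
    (by linarith) hst (fun u hu => hg u (hsub hu)) (fun u hu => hgM u (hsub hu))
    (hB.trans' (ENNReal.ofReal_le_ofReal (by linarith [min_le_right (η / (2 * M)) (B / 2)])))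
  have hstep := abs_sub_mem_nullLengths (f := g) (p := (s, x)) (q := (t, w)) hs ht
    (Or.inl ⟨hst, (ENNReal.ofReal_le_ofReal hxw).trans hB⟩)
  have hdetour := two_mul_sub_mem_nullLengths hX (hIc.out hs ht ⟨hsr, hrt⟩) ht hrt
    (w := w) (y := y) (by linarith) hr
  refine ⟨_, add_mem_nullLengths hstep hdetour, ?_⟩
  rw [abs_of_nonneg (sub_nonneg.2 hst)]
  linarith

theorem exists_mem_nullLengths_le_of_wpCausal (hX : HasApproxMidpoints X) (hIc : I.OrdConnected)
    {c M δ : ℝ} (hc : 0 < c) (hgc : ∀ u ∈ I, c ≤ g u) (hgM : ∀ u ∈ I, g u ≤ M) (hδ : 0 ≤ δ)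
    (hδ1 : δ ≤ 1) (hfg : ∀ u ∈ I, (f u)⁻¹ ≤ (1 + δ) * (g u)⁻¹) (hp : p.1 ∈ I) (hq : q.1 ∈ I)
    (hpq : WPCausal f p q) {η : ℝ} (hη : 0 < η) :
    ∃ L ∈ nullLengths I g p q, L ≤ (1 + δ * M / c) * (q.1 - p.1) + η := by
  obtain ⟨s, x⟩ := p
  obtain ⟨t, y⟩ := q
  obtain ⟨hst, hxy⟩ := hpq
  dsimp only at hp hq hst hxy ⊢
  have hsub : Ioc s t ⊆ I := Ioc_subset_Icc_self.trans (hIc.out hp hq)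
  have hM : 0 < M := hc.trans_le ((hgc s hp).trans (hgM s hp))
  have hupper : conformalTime g s t ≤ ENNReal.ofReal c⁻¹ * ENNReal.ofReal (t - s) :=
    conformalTime_le_ofReal_mul fun u hu => inv_anti₀ hc (hgc u (hsub hu))
  set B := (conformalTime g s t).toReal
  have hB : ENNReal.ofReal B = conformalTime g s t :=
    ENNReal.ofReal_toReal (ne_top_of_le_ne_top (by finiteness) hupper)
  have hBc : B ≤ c⁻¹ * (t - s) := by
    have := ENNReal.toReal_mono (by finiteness) hupper
    rwa [ENNReal.toReal_mul, ENNReal.toReal_ofReal (by positivity),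
      ENNReal.toReal_ofReal (sub_nonneg.2 hst)] at this
  have hxyB : dist x y ≤ (1 + δ) * B := by
    have := hxy.trans (conformalTime_le_ofReal_mul_conformalTime (by linarith)
      fun u hu => hfg u (hsub hu))
    rwa [← hB, ← ENNReal.ofReal_mul (by linarith),
      ENNReal.ofReal_le_ofReal_iff (by positivity)] at this
  have hcost : M * (δ * B) ≤ δ * M / c * (t - s) := by
    calc M * (δ * B) ≤ M * (δ * (c⁻¹ * (t - s))) := by gcongr
      _ = δ * M / c * (t - s) := by ring
  rcases le_or_gt (dist x y) B with hcausal | hexcess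
  · refine ⟨_, abs_sub_mem_nullLengths hp hq
      (Or.inl ⟨hst, (ENNReal.ofReal_le_ofReal hcausal).trans hB.le⟩), ?_⟩
    have := sub_nonneg.2 hst
    rw [abs_of_nonneg this]
    nlinarith [show 0 ≤ δ * M / c * (t - s) by positivity]
  · obtain ⟨L, hL, hLle⟩ := exists_mem_nullLengths_le_of_dist_le_add hX hIc hM
      (fun u hu => hc.trans_le (hgc u hu)) hgM hp hq hst hB.le hexcess (D := δ * B) (by linarith)
      (by nlinarith [ENNReal.toReal_nonneg (a := conformalTime g s t)]) hη
    exact ⟨L, hL, by linarith⟩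

variable {K : ℝ}

theorem exists_mem_nullLengths_le_of_wpChain
    (hstep : ∀ a b : ℝ × X, a.1 ∈ I → b.1 ∈ I → WPCausal f a b →
      ∀ η > 0, ∃ L ∈ nullLengths I g a b, L ≤ K * (b.1 - a.1) + η)
    (n : ℕ) {σ : ℕ → ℝ × X} (hσ : WPChain I f p q n σ) {η : ℝ} (hη : 0 < η) :
    ∃ L ∈ nullLengths I g p q,
      L ≤ K * ∑ i ∈ Finset.range (n + 1), |(σ (i + 1)).1 - (σ i).1| + η := by
  have hstep' : ∀ a b : ℝ × X, a.1 ∈ I → b.1 ∈ I → (WPCausal f a b ∨ WPCausal f b a) →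
      ∀ η > 0, ∃ L ∈ nullLengths I g a b, L ≤ K * |b.1 - a.1| + η := by
    rintro a b ha hb (h | h) η hη
    · obtain ⟨L, hL, hle⟩ := hstep a b ha hb h η hη
      exact ⟨L, hL, by rwa [abs_of_nonneg (sub_nonneg.2 h.1)]⟩
    · obtain ⟨L, hL, hle⟩ := hstep b a hb ha h η hη
      exact ⟨L, mem_nullLengths_symm hL, by rwa [abs_sub_comm, abs_of_nonneg (sub_nonneg.2 h.1)]⟩
  induction n generalizing q η with
  | zero =>
    obtain ⟨hσ0, hσ1, hσI, hσs⟩ := hσ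
    obtain ⟨L, hL, hle⟩ := hstep' _ _ (hσI 0 (by omega)) (hσI 1 le_rfl) (hσs 0 le_rfl) η hη
    rw [hσ0, hσ1] at hL
    exact ⟨L, hL, by simpa using hle⟩
  | succ n ih =>
    obtain ⟨hσ0, hσ1, hσI, hσs⟩ := hσ
    obtain ⟨L₁, hL₁, hle₁⟩ := ih ⟨hσ0, rfl, fun i hi => hσI i (by omega),
      fun i hi => hσs i (by omega)⟩ (half_pos hη)
    obtain ⟨L₂, hL₂, hle₂⟩ := hstep' _ _ (hσI (n + 1) (by omega)) (hσI (n + 2) le_rfl)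
      (hσs (n + 1) le_rfl) (η / 2) (half_pos hη)
    rw [hσ1] at hL₂
    refine ⟨L₁ + L₂, add_mem_nullLengths hL₁ hL₂, ?_⟩
    rw [Finset.sum_range_succ, mul_add]
    linarith

theorem nullDist_le_mul_nullDist_of_wpCausal (hK : 0 ≤ K)
    (hstep : ∀ a b : ℝ × X, a.1 ∈ I → b.1 ∈ I → WPCausal f a b →
      ∀ η > 0, ∃ L ∈ nullLengths I g a b, L ≤ K * (b.1 - a.1) + η)
    (hne : (nullLengths I f p q).Nonempty) :
    nullDist I g p q ≤ K * nullDist I f p q := by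
  refine le_of_forall_pos_le_add fun η hη => ?_
  obtain ⟨_, ⟨n, σ, hσ, rfl⟩, hlt⟩ :=
    Real.lt_sInf_add_pos hne (show 0 < η / (2 * (K + 1)) by positivity)
  obtain ⟨L, hL, hle⟩ := exists_mem_nullLengths_le_of_wpChain hstep n hσ (half_pos hη)
  have hKη : K * (η / (2 * (K + 1))) ≤ η / 2 := by
    rw [mul_div_assoc', div_le_div_iff₀ (by positivity) two_pos]
    nlinarith
  calc nullDist I g p q ≤ L := csInf_le bddBelow_nullLengths hL
    _ ≤ K * (nullDist I f p q + η / (2 * (K + 1))) + η / 2 :=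
      hle.trans (by gcongr; exact hlt.le)
    _ ≤ K * nullDist I f p q + η := by rw [mul_add]; linarith

theorem nullDist_le_one_add_mul_nullDist (hX : HasApproxMidpoints X) (hIc : I.OrdConnected)
    {c M δ : ℝ} (hc : 0 < c) (hfc : ∀ u ∈ I, c ≤ f u) (hgc : ∀ u ∈ I, c ≤ g u)
    (hgM : ∀ u ∈ I, g u ≤ M) (hδ : 0 ≤ δ) (hδ1 : δ ≤ 1) (hfg : ∀ u ∈ I, |f u - g u| ≤ δ * c)
    (hne : (nullLengths I f p q).Nonempty) :
    nullDist I g p q ≤ (1 + δ * M / c) * nullDist I f p q := by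
  have hp := fst_mem_of_nullLengths_nonempty hne
  have hM : 0 < M := hc.trans_le ((hgc p.1 hp).trans (hgM p.1 hp))
  have hinv : ∀ u ∈ I, (f u)⁻¹ ≤ (1 + δ) * (g u)⁻¹ := fun u hu =>
    inv_le_one_add_mul_inv hc (hfc u hu) (hgc u hu) (hfg u hu)
  exact nullDist_le_mul_nullDist_of_wpCausal (by positivity)
    (fun a b ha hb hab η hη => exists_mem_nullLengths_le_of_wpCausal hX hIc hc hgc hgM hδ hδ1 hinv
      ha hb hab hη) hne

end Comparison

theorem TendstoUniformlyOn.exists_forall_le_eventually {ι α : Type*} {l : Filter ι} [l.NeBot]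
    {F : ι → α → ℝ} {G : α → ℝ} {s : Set α} (hF : TendstoUniformlyOn F G l s)
    (hbdd : ∀ j, ∃ B, ∀ t ∈ s, F j t ≤ B) :
    ∃ M, (∀ t ∈ s, G t ≤ M) ∧ ∀ᶠ j in l, ∀ t ∈ s, F j t ≤ M := by
  have hclose := Metric.tendstoUniformlyOn_iff.1 hF 1 one_pos
  obtain ⟨N, hN⟩ := hclose.exists
  obtain ⟨B, hB⟩ := hbdd N
  have hG : ∀ t ∈ s, G t ≤ B + 1 := fun t ht => by
    have := hN t ht
    rw [Real.dist_eq, abs_sub_lt_iff] at this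
    linarith [hB t ht]
  refine ⟨B + 2, fun t ht => by linarith [hG t ht], ?_⟩
  filter_upwards [hclose] with j hj t ht
  have := hj t ht
  rw [Real.dist_eq, abs_sub_lt_iff] at this
  linarith [hG t ht]

theorem tendsto_of_forall_eventually_le_one_add_mul {ι : Type*} {l : Filter ι} {a : ι → ℝ} {L : ℝ}
    (hL : 0 ≤ L) (h : ∀ ε > 0, ∀ᶠ j in l, a j ≤ (1 + ε) * L ∧ L ≤ (1 + ε) * a j) :
    Tendsto a l (𝓝 L) := by
  rw [Metric.tendsto_nhds]
  intro ε hε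
  have hεL : ε / (L + 1) * L < ε := by
    rw [div_mul_eq_mul_div, div_lt_iff₀ (by positivity)]
    nlinarith
  filter_upwards [h (ε / (L + 1)) (by positivity)] with j ⟨hup, hdown⟩
  rw [Real.dist_eq, abs_sub_lt_iff]
  constructor
  · nlinarith
  · rcases le_total L (a j) with hLa | haL
    · linarith
    · nlinarith [show 0 ≤ ε / (L + 1) by positivity]

theorem stmt10_general {X : Type*} [MetricSpace X]
    (hX : ∀ x y : X, ∀ ε : ℝ, 0 < ε →
      ∃ z : X, max (dist x z) (dist z y) ≤ dist x y / 2 + ε)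
    (I : Set ℝ) (hIc : I.OrdConnected) (hInd : ∃ a ∈ I, ∃ b ∈ I, a < b)
    (c : ℝ) (hc : 0 < c)
    (f : ℕ → ℝ → ℝ) (flim : ℝ → ℝ)
    (hbdd : ∀ j, ∃ B : ℝ, ∀ t ∈ I, f j t ≤ B)
    (hlow : ∀ j, ∀ t ∈ I, c ≤ f j t)
    (hunif : TendstoUniformlyOn f flim Filter.atTop I) :
    ∀ p q : ℝ × X, p.1 ∈ I → q.1 ∈ I →
      Filter.Tendsto (fun j => nullDist I (f j) p q) Filter.atTop
        (nhds (nullDist I flim p q)) := by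
  intro p q hp hq
  obtain ⟨a, ha, b, hb, hab⟩ := hInd
  have hlimc : ∀ t ∈ I, c ≤ flim t := fun t ht =>
    ge_of_tendsto (hunif.tendsto_at ht) (Eventually.of_forall fun j => hlow j t ht)
  obtain ⟨M, hlimM, hfM⟩ := hunif.exists_forall_le_eventually hbdd
  have hM : 0 < M := hc.trans_le ((hlimc a ha).trans (hlimM a ha))
  have hne : ∀ g : ℝ → ℝ, (∀ t ∈ I, c ≤ g t) → (∀ t ∈ I, g t ≤ M) →
      (nullLengths I g p q).Nonempty := fun g hgc hgM =>
    nullLengths_nonempty hX hIc ha hb hab (fun t ht => hc.trans_le (hgc t ht)) hgM hp hq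
  refine tendsto_of_forall_eventually_le_one_add_mul nullDist_nonneg fun ε hε => ?_
  set δ := min 1 (ε * c / M)
  have hδ : 0 < δ := lt_min one_pos (by positivity)
  have hδε : δ * M / c ≤ ε := by
    rw [div_le_iff₀ hc, ← le_div_iff₀ hM]
    exact (min_le_right _ _).trans_eq (by ring)
  filter_upwards [hfM, Metric.tendstoUniformlyOn_iff.1 hunif (δ * c) (by positivity)]
    with j hjM hj
  have hclose : ∀ t ∈ I, |flim t - f j t| ≤ δ * c := fun t ht => (hj t ht).le
  constructor
  · calc nullDist I (f j) p q ≤ (1 + δ * M / c) * nullDist I flim p q :=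
          nullDist_le_one_add_mul_nullDist hX hIc hc hlimc (hlow j) hjM hδ.le (min_le_left _ _)
            hclose (hne _ hlimc hlimM)
      _ ≤ (1 + ε) * nullDist I flim p q := by gcongr; exact nullDist_nonneg
  · calc nullDist I flim p q ≤ (1 + δ * M / c) * nullDist I (f j) p q :=
          nullDist_le_one_add_mul_nullDist hX hIc hc (hlow j) hlimc hlimM hδ.le (min_le_left _ _)
            (fun t ht => abs_sub_comm (f j t) (flim t) ▸ hclose t ht) (hne _ (hlow j) hjM)
      _ ≤ (1 + ε) * nullDist I (f j) p q := by gcongr; exact nullDist_nonneg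

/-- for a length space `X`, a nondegenerate interval `I` and bounded
continuous warping functions `f_j ≥ c > 0` converging uniformly on `I` to `f_∞`, the null
distances converge pointwise: `d̂_{f_j}(p,q) → d̂_{f_∞}(p,q)` for all `p, q ∈ I × X`. -/
theorem stmt10 {X : Type*} [MetricSpace X]
    (hX : ∀ x y : X, ∀ ε : ℝ, 0 < ε →
      ∃ z : X, max (dist x z) (dist z y) ≤ dist x y / 2 + ε)
    (I : Set ℝ) (hIc : I.OrdConnected) (hInd : ∃ a ∈ I, ∃ b ∈ I, a < b)
    (c : ℝ) (hc : 0 < c)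
    (f : ℕ → ℝ → ℝ) (flim : ℝ → ℝ)
    (hcont : ∀ j, ContinuousOn (f j) I)
    (hbdd : ∀ j, ∃ B : ℝ, ∀ t ∈ I, f j t ≤ B)
    (hlow : ∀ j, ∀ t ∈ I, c ≤ f j t)
    (hunif : TendstoUniformlyOn f flim Filter.atTop I) :
    ∀ p q : ℝ × X, p.1 ∈ I → q.1 ∈ I →
      Filter.Tendsto (fun j => nullDist I (f j) p q) Filter.atTop
        (nhds (nullDist I flim p q)) :=
  stmt10_general hX I hIc hInd c hc f flim hbdd hlow hunif
end

section
/- Fix h₀ ∈ (0,1) and a continuous nondecreasing h : [0,1] → (0,1] with h(t) = h₀ for t ∈ [0,1/2] and h(1) = 1. For j ≥ 1 define f_j : [0,2] → (0,1] by f_j(t) = h(j·t) for t ∈ [0, 1/j] and f_j(t) = 1 for t ∈ (1/j, 2]. Let X be a compact length space and let d̂_j denote the null distance of the warped product [0,2] ×_{f_j} X. For p = (t_p, x) and q = (t_q, y) in [0,2] × X define d₀(p,q) := min{ max(|t_p − t_q|, d(x,y)), t_p + t_q + h₀ · inf{ d(x',y') : x', y' ∈ X, d(x,x') ≤ t_p,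 d(y,y') ≤ t_q } }. Then sup_{p,q ∈ [0,2]×X} |d̂_j(p,q) − d₀(p,q)| → 0 as j → ∞. (In particular, although f_j → f_∞ pointwise with f_∞ ≡ 1 on (0,2], the null distances do not converge to the null distance max(|Δt|, d) of the limiting warped product.) -/
/-!
Below the level `1/j` light is faster than in the limit (speed at most `h₀⁻¹`, exactly `h₀⁻¹`
below `1/(2j)`), above it light has speed one. A chain staying above `1/j` therefore costs at
least `max(|Δt|, d)`, which is also achieved up to `ε` by zigzagging along an approximate geodesic.
A chain dipping below `1/j` pays `t_p + t_q` up to `2/j` for descending and climbing back, and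
crosses space at rate `h₀`; the cheapest such chain drops from `x` to a point of `B(x, t_p)`,
zigzags in the fast layer to a point of `B(y, t_q)` and rises to `y`. In a length space the distance
between these balls is `max(d - t_p - t_q, 0)`, whence `|d̂_j - d₀| ≤ 2/j`.
-/

open MeasureTheory

/-- The warping functions of the example: `f_j(t) = h(j·t)` for `t ∈ [0,1/j]` and
`f_j(t) = 1` for `t ∈ (1/j,2]`. -/
noncomputable def warpSeq (h : ℝ → ℝ) (j : ℕ) : ℝ → ℝ :=
  fun t => if t ≤ 1 / (j : ℝ) then h ((j : ℝ) * t) else 1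

/-- The limit distance of the example: for `p = (t_p,x)`, `q = (t_q,y)`,
`d₀(p,q) = min{ max(|t_p−t_q|, d(x,y)),
               t_p + t_q + h₀·inf{ d(x',y') : d(x,x') ≤ t_p, d(y,y') ≤ t_q } }`. -/
noncomputable def limDist {X : Type*} [MetricSpace X] (h₀ : ℝ) (p q : ℝ × X) : ℝ :=
  min (max |p.1 - q.1| (dist p.2 q.2))
    (p.1 + q.1 + h₀ * sInf { r : ℝ | ∃ x' y' : X,
      dist p.2 x' ≤ p.1 ∧ dist q.2 y' ≤ q.1 ∧ r = dist x' y' })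

def IsLengthSpace (X : Type*) [MetricSpace X] : Prop :=
  ∀ x y : X, ∀ ε : ℝ, 0 < ε → ∃ z : X, max (dist x z) (dist z y) ≤ dist x y / 2 + ε

namespace IsLengthSpace

variable {X : Type*} [MetricSpace X]

theorem induction_on_dist (hX : IsLengthSpace X) {C : X → X → ℝ → Prop} {δ : ℝ} (hδ : 0 < δ)
    (mono : ∀ {x y a b}, a ≤ b → C x y a → C x y b)
    (trans : ∀ {x y z a b}, C x y a → C y z b → C x z (a + b))
    (local_le : ∀ x y, dist x y < δ → ∀ η, 0 < η → C x y (dist x y + η))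
    (x y : X) {η : ℝ} (hη : 0 < η) : C x y (dist x y + η) := by
  suffices key : ∀ k : ℕ, ∀ x y : X, dist x y < δ * 2 ^ k → ∀ η, 0 < η → C x y (dist x y + η) by
    obtain ⟨k, hk⟩ := pow_unbounded_of_one_lt (dist x y / δ) one_lt_two
    exact key k x y (by rwa [div_lt_iff₀' hδ] at hk) η hη
  intro k
  induction k with
  | zero => simpa using local_le
  | succ k ih =>
    intro x y hxy η hη
    set ε := min (η / 4) ((δ * 2 ^ (k + 1) - dist x y) / 4)
    have hε : 0 < ε := lt_min (by positivity) (by linarith)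
    have hε₁ : ε ≤ η / 4 := min_le_left _ _
    have hε₂ : ε ≤ (δ * 2 ^ (k + 1) - dist x y) / 4 := min_le_right _ _
    obtain ⟨w, hw⟩ := hX x y ε hε
    have hxw : dist x w ≤ dist x y / 2 + ε := (le_max_left _ _).trans hw
    have hwy : dist w y ≤ dist x y / 2 + ε := (le_max_right _ _).trans hw
    have half_lt : dist x y / 2 + ε < δ * 2 ^ k := by rw [pow_succ] at hxy hε₂; linarith
    refine mono ?_ (trans (ih x w (hxw.trans_lt half_lt) (η / 4) (by positivity))
      (ih w y (hwy.trans_lt half_lt) (η / 4) (by positivity)))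
    linarith

theorem exists_dist_le_dist_le (hX : IsLengthSpace X) (x y : X) {s η : ℝ} (hs : 0 ≤ s)
    (hη : 0 < η) : ∃ w, dist x w ≤ s ∧ dist w y ≤ max (dist x y - s) 0 + η := by
  -- `C x y B`: every split `s + (B - s)` of the budget `B` is realised by a point `w`, up to
  -- an error `η / 2` that does not accumulate under concatenation.
  let C : X → X → ℝ → Prop := fun x y B => dist x y ≤ B ∧
    ∀ s, 0 ≤ s → s ≤ B → ∃ w, dist x w ≤ s ∧ dist w y ≤ B - s + η / 2
  have mono : ∀ {x y a b}, a ≤ b → C x y a → C x y b := by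
    intro x y a b hab ⟨hxy, hC⟩
    refine ⟨hxy.trans hab, fun s hs hsb => ?_⟩
    rcases le_or_gt s a with hsa | has
    · obtain ⟨w, hxw, hwy⟩ := hC s hs hsa
      exact ⟨w, hxw, by linarith⟩
    · exact ⟨y, by linarith, by rw [dist_self]; linarith⟩
  have trans : ∀ {x y z a b}, C x y a → C y z b → C x z (a + b) := by
    intro x y z a b ⟨hxy, hC₁⟩ ⟨hyz, hC₂⟩
    refine ⟨(dist_triangle x y z).trans (add_le_add hxy hyz), fun s hs hsab => ?_⟩
    rcases le_or_gt s a with hsa | has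
    · obtain ⟨w, hxw, hwy⟩ := hC₁ s hs hsa
      exact ⟨w, hxw, by linarith [dist_triangle w y z]⟩
    · obtain ⟨w, hyw, hwz⟩ := hC₂ (s - a) (by linarith) (by linarith)
      exact ⟨w, by linarith [dist_triangle x y w], by linarith⟩
  have local_le : ∀ x y, dist x y < η / 2 → ∀ ε, 0 < ε → C x y (dist x y + ε) :=
    fun x y hxy ε hε => ⟨by linarith, fun s hs hsB => ⟨x, by rwa [dist_self], by linarith⟩⟩
  obtain ⟨-, hC⟩ :=
    hX.induction_on_dist (C := C) (half_pos hη) mono trans local_le x y (half_pos hη)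
  rcases le_or_gt s (dist x y + η / 2) with hsB | hBs
  · obtain ⟨w, hxw, hwy⟩ := hC s hs hsB
    exact ⟨w, hxw, by linarith [le_max_left (dist x y - s) 0]⟩
  · exact ⟨y, by linarith, by rw [dist_self]; positivity⟩

theorem exists_dist_le_dist_le_dist_le (hX : IsLengthSpace X) (x y : X) {s t η : ℝ}
    (hs : 0 ≤ s) (ht : 0 ≤ t) (hη : 0 < η) :
    ∃ x' y', dist x x' ≤ s ∧ dist y y' ≤ t ∧ dist x' y' ≤ max (dist x y - s - t) 0 + η := by
  obtain ⟨x', hxx', hx'y⟩ := hX.exists_dist_le_dist_le x y hs (half_pos hη)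
  obtain ⟨y', hyy', hy'x'⟩ := hX.exists_dist_le_dist_le y x' ht (half_pos hη)
  refine ⟨x', y', hxx', hyy', ?_⟩
  rw [dist_comm y x', dist_comm y' x'] at hy'x'
  have : max (dist x' y - t) 0 ≤ max (dist x y - s - t) 0 + η / 2 := by
    refine max_le ?_ (by positivity)
    rcases le_total (dist x y - s) 0 with h | h
    · rw [max_eq_right h] at hx'y; linarith [le_max_right (dist x y - s - t) 0]
    · rw [max_eq_left h] at hx'y; linarith [le_max_left (dist x y - s - t) 0]
  linarith

theorem sInf_dist_eq (hX : IsLengthSpace X) (x y : X) {s t : ℝ} (hs : 0 ≤ s) (ht : 0 ≤ t) :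
    sInf {r | ∃ x' y' : X, dist x x' ≤ s ∧ dist y y' ≤ t ∧ r = dist x' y'}
      = max (dist x y - s - t) 0 := by
  apply le_antisymm
  · refine le_of_forall_pos_le_add fun η hη => ?_
    obtain ⟨x', y', hxx', hyy', hx'y'⟩ := hX.exists_dist_le_dist_le_dist_le x y hs ht hη
    have hbdd : BddBelow {r | ∃ x' y' : X, dist x x' ≤ s ∧ dist y y' ≤ t ∧ r = dist x' y'} :=
      ⟨0, by rintro _ ⟨_, _, -, -, rfl⟩; exact dist_nonneg⟩
    exact (csInf_le hbdd ⟨x', y', hxx', hyy', rfl⟩).trans hx'y'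
  · refine le_csInf ⟨_, x, y, by simpa, by simpa, rfl⟩ ?_
    rintro _ ⟨x', y', hxx', hyy', rfl⟩
    exact max_le (by linarith [dist_triangle4 x x' y' y, dist_comm y y']) dist_nonneg

end IsLengthSpace

theorem limDist_eq {X : Type*} [MetricSpace X] (hX : IsLengthSpace X) (h₀ : ℝ) {p q : ℝ × X}
    (hp : 0 ≤ p.1) (hq : 0 ≤ q.1) :
    limDist h₀ p q = min (max |p.1 - q.1| (dist p.2 q.2))
      (p.1 + q.1 + h₀ * max (dist p.2 q.2 - p.1 - q.1) 0) := by
  rw [limDist, hX.sInf_dist_eq _ _ hp hq]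

theorem limDist_le {X : Type*} [MetricSpace X] (hX : IsLengthSpace X) {h₀ : ℝ} (hh₀ : h₀ ≤ 1)
    {p q : ℝ × X} (hp : 0 ≤ p.1) (hq : 0 ≤ q.1) :
    limDist h₀ p q ≤ max |p.1 - q.1|
      (min (dist p.2 q.2) (h₀ * dist p.2 q.2 + (1 - h₀) * (p.1 + q.1))) := by
  rw [limDist_eq hX h₀ hp hq]
  rcases le_total (dist p.2 q.2) (p.1 + q.1) with hd | hd
  · have hdE : dist p.2 q.2 ≤ h₀ * dist p.2 q.2 + (1 - h₀) * (p.1 + q.1) := by nlinarith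
    rw [min_eq_left hdE]
    exact min_le_left _ _
  · have hEd : h₀ * dist p.2 q.2 + (1 - h₀) * (p.1 + q.1) ≤ dist p.2 q.2 := by nlinarith
    rw [min_eq_right hEd]
    refine (min_le_right _ _).trans (le_of_eq_of_le ?_ (le_max_right _ _))
    rw [max_eq_left (by linarith)]
    ring

section Chains

open scoped Interval

variable {X : Type*} [MetricSpace X] {I : Set ℝ} {f : ℝ → ℝ}

def WPJoins (I : Set ℝ) (f : ℝ → ℝ) (p q : ℝ × X) (B : ℝ) : Prop :=
  ∃ n σ, WPChain I f p q n σ ∧ ∑ i ∈ Finset.range (n + 1), |(σ (i + 1)).1 - (σ i).1| ≤ B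

theorem WPJoins.mono {p q : ℝ × X} {a b : ℝ} (hab : a ≤ b) (h : WPJoins I f p q a) :
    WPJoins I f p q b :=
  let ⟨n, σ, hσ, hlen⟩ := h
  ⟨n, σ, hσ, hlen.trans hab⟩

theorem WPJoins.trans {p q r : ℝ × X} {a b : ℝ} (h₁ : WPJoins I f p q a)
    (h₂ : WPJoins I f q r b) : WPJoins I f p r (a + b) := by
  obtain ⟨n₁, σ₁, ⟨hσ₁0, hσ₁q, hσ₁I, hσ₁c⟩, hlen₁⟩ := h₁
  obtain ⟨n₂, σ₂, ⟨hσ₂0, hσ₂r, hσ₂I, hσ₂c⟩, hlen₂⟩ := h₂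
  let σ : ℕ → ℝ × X := fun i => if i ≤ n₁ + 1 then σ₁ i else σ₂ (i - (n₁ + 1))
  have hσ_left : ∀ i ≤ n₁ + 1, σ i = σ₁ i := fun i hi => if_pos hi
  have hσ_right : ∀ k, σ (n₁ + 1 + k) = σ₂ k := by
    intro k
    rcases Nat.eq_zero_or_pos k with rfl | hk
    · rw [add_zero, hσ_left _ le_rfl, hσ₁q, hσ₂0]
    · exact (if_neg (by omega)).trans (by rw [Nat.add_sub_cancel_left])
  refine ⟨n₁ + n₂ + 1, σ, ⟨?_, ?_, ?_, ?_⟩, ?_⟩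
  · rw [hσ_left 0 (Nat.zero_le _), hσ₁0]
  · rw [show n₁ + n₂ + 1 + 1 = n₁ + 1 + (n₂ + 1) by omega, hσ_right, hσ₂r]
  · intro i hi
    rcases le_or_gt i (n₁ + 1) with hi₁ | hi₁
    · exact hσ_left i hi₁ ▸ hσ₁I i hi₁
    · obtain ⟨k, rfl⟩ := Nat.exists_eq_add_of_le hi₁.le
      exact hσ_right k ▸ hσ₂I k (by omega)
  · intro i hi
    rcases lt_or_ge i (n₁ + 1) with hi₁ | hi₁
    · rw [hσ_left i hi₁.le, hσ_left (i + 1) hi₁]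
      exact hσ₁c i (by omega)
    · obtain ⟨k, rfl⟩ := Nat.exists_eq_add_of_le hi₁
      rw [hσ_right, add_assoc, hσ_right]
      exact hσ₂c k (by omega)
  · rw [show n₁ + n₂ + 1 + 1 = n₁ + 1 + (n₂ + 1) by omega, Finset.sum_range_add]
    refine add_le_add (le_of_eq_of_le (Finset.sum_congr rfl fun i hi => ?_) hlen₁)
      (le_of_eq_of_le (Finset.sum_congr rfl fun k _ => ?_) hlen₂)
    · rw [hσ_left i (by simp at hi; omega), hσ_left (i + 1) (by simp at hi; omega)]
    · rw [hσ_right, add_assoc (n₁ + 1) k 1, hσ_right]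

theorem WPJoins.of_segment {p q : ℝ × X} (hp : p.1 ∈ I) (hq : q.1 ∈ I)
    (h : WPCausal f p q ∨ WPCausal f q p) : WPJoins I f p q |q.1 - p.1| := by
  refine ⟨0, fun i => if i = 0 then p else q, ⟨rfl, rfl, fun i _ => ?_, fun i hi => ?_⟩, ?_⟩
  · by_cases hi : i = 0 <;> simp [hi, hp, hq]
  · obtain rfl : i = 0 := by omega
    simpa using h
  · simp

theorem nullDist_le {p q : ℝ × X} {B : ℝ} (h : WPJoins I f p q B) : nullDist I f p q ≤ B := by
  obtain ⟨n, σ, hσ, hlen⟩ := h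
  rw [nullDist]
  refine csInf_le_of_le ⟨0, ?_⟩ ⟨n, σ, hσ, rfl⟩ hlen
  rintro _ ⟨n, σ, -, rfl⟩
  exact Finset.sum_nonneg fun i _ => abs_nonneg _

theorem le_nullDist {p q : ℝ × X} {A B : ℝ} (h : WPJoins I f p q B)
    (hA : ∀ n σ, WPChain I f p q n σ →
      A ≤ ∑ i ∈ Finset.range (n + 1), |(σ (i + 1)).1 - (σ i).1|) :
    A ≤ nullDist I f p q := by
  obtain ⟨n, σ, hσ, -⟩ := h
  rw [nullDist]
  refine le_csInf ⟨_, n, σ, hσ, rfl⟩ ?_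
  rintro _ ⟨n, σ, hσ, rfl⟩
  exact hA n σ hσ

end Chains

section Causal

open scoped Interval

variable {X : Type*} [MetricSpace X] {I : Set ℝ} {f : ℝ → ℝ}

theorem ofReal_mul_le_setLIntegral_inv {c s t : ℝ} (hc : 0 ≤ c)
    (hf : ∀ u ∈ Set.Ioc s t, c ≤ (f u)⁻¹) :
    ENNReal.ofReal (c * (t - s)) ≤ ∫⁻ u in Set.Ioc s t, ENNReal.ofReal (f u)⁻¹ := by
  rw [ENNReal.ofReal_mul hc, ← Real.volume_Ioc, ← setLIntegral_const]
  exact setLIntegral_mono' measurableSet_Ioc fun u hu => ENNReal.ofReal_le_ofReal (hf u hu)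

theorem setLIntegral_inv_le_ofReal_mul {c s t : ℝ} (hc : 0 ≤ c)
    (hf : ∀ u ∈ Set.Ioc s t, (f u)⁻¹ ≤ c) :
    ∫⁻ u in Set.Ioc s t, ENNReal.ofReal (f u)⁻¹ ≤ ENNReal.ofReal (c * (t - s)) := by
  rw [ENNReal.ofReal_mul hc, ← Real.volume_Ioc, ← setLIntegral_const]
  exact setLIntegral_mono' measurableSet_Ioc fun u hu => ENNReal.ofReal_le_ofReal (hf u hu)

theorem wpCausal_of_dist_le {p q : ℝ × X} {c : ℝ} (hpq : p.1 ≤ q.1) (hc : 0 ≤ c)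
    (hf : ∀ u ∈ Set.Ioc p.1 q.1, c ≤ (f u)⁻¹) (hd : dist p.2 q.2 ≤ c * (q.1 - p.1)) :
    WPCausal f p q :=
  ⟨hpq, (ENNReal.ofReal_le_ofReal hd).trans (ofReal_mul_le_setLIntegral_inv hc hf)⟩

theorem WPJoins.of_dist_le {p q : ℝ × X} {c : ℝ} (hp : p.1 ∈ I) (hq : q.1 ∈ I) (hc : 0 ≤ c)
    (hf : ∀ u ∈ Ι p.1 q.1, c ≤ (f u)⁻¹) (hd : dist p.2 q.2 ≤ c * |q.1 - p.1|) :
    WPJoins I f p q |q.1 - p.1| := by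
  refine .of_segment hp hq ?_
  rcases le_total p.1 q.1 with hpq | hqp
  · rw [Set.uIoc_of_le hpq] at hf
    rw [abs_of_nonneg (sub_nonneg.2 hpq)] at hd
    exact .inl (wpCausal_of_dist_le hpq hc hf hd)
  · rw [Set.uIoc_of_ge hqp] at hf
    rw [abs_sub_comm, abs_of_nonneg (sub_nonneg.2 hqp), dist_comm] at hd
    exact .inr (wpCausal_of_dist_le hqp hc hf hd)

/-- A tent `(t, x) → (s, m) → (t, y)` over an approximate midpoint `m` costs about
`c⁻¹ · dist x y`; gluing tents along a fine subdivision of `x, y` gives the bound. -/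
theorem WPJoins.level [I.OrdConnected] (hX : IsLengthSpace X) {t t' c : ℝ} (ht : t ∈ I)
    (ht' : t' ∈ I) (htt' : t ≠ t') (hc : 0 < c) (hf : ∀ u ∈ Ι t t', c ≤ (f u)⁻¹) (x y : X)
    {η : ℝ} (hη : 0 < η) : WPJoins I f (t, x) (t, y) (c⁻¹ * (dist x y + η)) := by
  set δ := c * |t' - t|
  have hδ : 0 < δ := mul_pos hc (abs_pos.2 (sub_ne_zero.2 htt'.symm))
  refine hX.induction_on_dist (C := fun x y B => WPJoins I f (t, x) (t, y) (c⁻¹ * B)) hδ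
    (fun hab h => h.mono (by gcongr)) (fun h₁ h₂ => by simpa only [mul_add] using h₁.trans h₂)
    ?_ x y hη
  intro x y hxy η hη
  set ε := min (η / 2) (δ / 2) with hε_def
  have hε : 0 < ε := lt_min (by positivity) (by positivity)
  obtain ⟨m, hm⟩ := hX x y ε hε
  set r := dist x y / 2 + ε with hr_def
  have hr : 0 < r := by positivity
  have hrδ : r ≤ δ := by linarith [min_le_right (η / 2) (δ / 2)]
  obtain ⟨s, hs_def⟩ : ∃ s, s = r / δ * (t' - t) + t := ⟨_, rfl⟩
  have hs_mem : s ∈ [[t, t']] := hs_def ▸ (convex_uIcc t t').lineMap_mem Set.left_mem_uIcc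
    Set.right_mem_uIcc ⟨by positivity, (div_le_one hδ).2 hrδ⟩
  have hsI : s ∈ I := Set.OrdConnected.uIcc_subset ‹_› ht ht' hs_mem
  have hs : c * |s - t| = r := by
    rw [hs_def, add_sub_cancel_right, abs_mul, abs_of_pos (by positivity)]
    field_simp
    rfl
  have hf' : ∀ u ∈ Ι t s, c ≤ (f u)⁻¹ := fun u hu => hf u
    (Set.uIoc_subset_uIoc_of_uIcc_subset_uIcc (Set.uIcc_subset_uIcc Set.left_mem_uIcc hs_mem) hu)
  have up : WPJoins I f (t, x) (s, m) |s - t| :=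
    .of_dist_le ht hsI hc.le hf' (hs.symm ▸ (le_max_left _ _).trans hm)
  have down : WPJoins I f (s, m) (t, y) |t - s| :=
    .of_dist_le hsI ht hc.le (Set.uIoc_comm t s ▸ hf')
      (by rw [abs_sub_comm]; exact hs.symm ▸ (le_max_right _ _).trans hm)
  refine (up.trans down).mono ?_
  have hst : |s - t| = c⁻¹ * r := by rw [← hs, inv_mul_cancel_left₀ hc.ne']
  rw [abs_sub_comm t s, hst, ← mul_add]
  refine mul_le_mul_of_nonneg_left ?_ (inv_nonneg.2 hc.le)
  linarith [min_le_left (η / 2) (δ / 2)]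

end Causal

theorem dist_add_dist_le_range_sum_dist {α : Type*} [PseudoMetricSpace α] (g : ℕ → α) {k n : ℕ}
    (hk : k ≤ n) :
    dist (g 0) (g k) + dist (g k) (g n) ≤ ∑ i ∈ Finset.range n, dist (g i) (g (i + 1)) := by
  rw [← Finset.sum_range_add_sum_Ico _ hk]
  exact add_le_add (dist_le_range_sum_dist g k) (dist_le_Ico_sum_dist g hk)

section LowerBound

variable {X : Type*} [MetricSpace X] {I : Set ℝ} {f : ℝ → ℝ} {h₀ a : ℝ}

/-- Below the level `a` light moves at most `h₀⁻¹` times faster than above it, so a causal segment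
pays for its spatial displacement at rate `h₀` and for the time it spends above `a` in full. -/
theorem WPCausal.dist_le (hh₀ : 0 < h₀) (hf₀ : ∀ u, 0 < u → (f u)⁻¹ ≤ h₀⁻¹)
    (hfa : ∀ u, a < u → (f u)⁻¹ ≤ 1) {p q : ℝ × X} (hp : 0 ≤ p.1) (hpq : WPCausal f p q) :
    h₀ * dist p.2 q.2 + (1 - h₀) * (max q.1 a - max p.1 a) ≤ q.1 - p.1 := by
  obtain ⟨hle, hint⟩ := hpq
  set m := max p.1 (min a q.1)
  have hpm : p.1 ≤ m := le_max_left _ _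
  have hmq : m ≤ q.1 := max_le hle (min_le_right _ _)
  have below := setLIntegral_inv_le_ofReal_mul (f := f) (inv_nonneg.2 hh₀.le) (t := m)
    fun u hu => hf₀ u (hp.trans_lt hu.1)
  have above := setLIntegral_inv_le_ofReal_mul (f := f) zero_le_one (s := m) (t := q.1)
    fun u hu => hfa u <| by
      rcases min_lt_iff.1 ((le_max_right _ _).trans_lt hu.1) with h | h
      · exact h
      · exact absurd hu.2 (not_le.2 h)
  rw [← Set.Ioc_union_Ioc_eq_Ioc hpm hmq,
    lintegral_union measurableSet_Ioc (Set.Ioc_disjoint_Ioc_of_le le_rfl)] at hint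
  have hd : dist p.2 q.2 ≤ h₀⁻¹ * (m - p.1) + 1 * (q.1 - m) := by
    rw [← ENNReal.ofReal_le_ofReal_iff (by nlinarith [inv_nonneg.2 hh₀.le]),
      ENNReal.ofReal_add (by nlinarith [inv_nonneg.2 hh₀.le]) (by linarith)]
    exact hint.trans (add_le_add below above)
  have hm : q.1 - m = max q.1 a - max p.1 a := by
    simp only [m, max_def, min_def]
    split_ifs <;> linarith
  have := mul_le_mul_of_nonneg_left hd hh₀.le
  rw [mul_add, ← mul_assoc, mul_inv_cancel₀ hh₀.ne', one_mul] at this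
  rw [← hm]
  linarith

theorem dist_le_of_wpCausal_or (hh₀ : 0 < h₀) (hf₀ : ∀ u, 0 < u → (f u)⁻¹ ≤ h₀⁻¹)
    (hfa : ∀ u, a < u → (f u)⁻¹ ≤ 1) {p q : ℝ × X} (hp : 0 ≤ p.1) (hq : 0 ≤ q.1)
    (h : WPCausal f p q ∨ WPCausal f q p) :
    h₀ * dist p.2 q.2 + (1 - h₀) * dist (max p.1 a) (max q.1 a) ≤ dist p.1 q.1 := by
  rcases h with hpq | hqp
  · rw [dist_comm (max p.1 a), dist_comm p.1, Real.dist_eq, Real.dist_eq,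
      abs_of_nonneg (sub_nonneg.2 (max_le_max_right a hpq.1)), abs_of_nonneg (sub_nonneg.2 hpq.1)]
    exact hpq.dist_le hh₀ hf₀ hfa hp
  · rw [dist_comm p.2, Real.dist_eq, Real.dist_eq,
      abs_of_nonneg (sub_nonneg.2 (max_le_max_right a hqp.1)), abs_of_nonneg (sub_nonneg.2 hqp.1)]
    exact hqp.dist_le hh₀ hf₀ hfa hq

/-- If the chain dips below `a`, then `max t a` descends from `max p.1 a` to `a` and climbs back to
`max q.1 a`, so its total variation is at least `p.1 + q.1 - 2a`; otherwise `max t a = t`. -/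
theorem WPChain.lower_bound (hh₀ : 0 < h₀) (hh₀₁ : h₀ ≤ 1) (ha : 0 ≤ a)
    (hf₀ : ∀ u, 0 < u → (f u)⁻¹ ≤ h₀⁻¹) (hfa : ∀ u, a < u → (f u)⁻¹ ≤ 1)
    (hI : ∀ t ∈ I, 0 ≤ t) {p q : ℝ × X} {n : ℕ} {σ : ℕ → ℝ × X} (hσ : WPChain I f p q n σ) :
    |p.1 - q.1| ≤ ∑ i ∈ Finset.range (n + 1), |(σ (i + 1)).1 - (σ i).1| ∧
      (dist p.2 q.2 ≤ ∑ i ∈ Finset.range (n + 1), |(σ (i + 1)).1 - (σ i).1| ∨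
        h₀ * dist p.2 q.2 + (1 - h₀) * (p.1 + q.1)
          ≤ ∑ i ∈ Finset.range (n + 1), |(σ (i + 1)).1 - (σ i).1| + 2 * a) := by
  obtain ⟨hσ0, hσn, hσI, hσc⟩ := hσ
  set τ : ℕ → ℝ := fun i => (σ i).1
  set g : ℕ → ℝ := fun i => max (τ i) a
  set D := ∑ i ∈ Finset.range (n + 1), dist (σ i).2 (σ (i + 1)).2
  set V := ∑ i ∈ Finset.range (n + 1), dist (g i) (g (i + 1))
  have hL : ∑ i ∈ Finset.range (n + 1), |(σ (i + 1)).1 - (σ i).1|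
      = ∑ i ∈ Finset.range (n + 1), dist (τ i) (τ (i + 1)) :=
    Finset.sum_congr rfl fun i _ => by rw [Real.dist_eq, abs_sub_comm]
  rw [hL]
  have hsteps : h₀ * D + (1 - h₀) * V ≤ ∑ i ∈ Finset.range (n + 1), dist (τ i) (τ (i + 1)) := by
    rw [Finset.mul_sum, Finset.mul_sum, ← Finset.sum_add_distrib]
    refine Finset.sum_le_sum fun i hi => ?_
    have hi : i ≤ n := Nat.lt_succ_iff.1 (Finset.mem_range.1 hi)
    exact dist_le_of_wpCausal_or hh₀ hf₀ hfa (hI _ (hσI i (by omega)))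
      (hI _ (hσI (i + 1) (by omega))) (hσc i hi)
  have hD : dist p.2 q.2 ≤ D := hσ0 ▸ hσn ▸ dist_le_range_sum_dist (fun i => (σ i).2) (n + 1)
  refine ⟨?_, ?_⟩
  · rw [← Real.dist_eq, ← hσ0, ← hσn]
    exact dist_le_range_sum_dist τ (n + 1)
  by_cases hdip : ∃ k ≤ n + 1, τ k < a
  · obtain ⟨k, hk, hka⟩ := hdip
    have hgk : g k = a := max_eq_right hka.le
    have hV : p.1 - a + (q.1 - a) ≤ V := by
      refine le_trans ?_ (dist_add_dist_le_range_sum_dist g hk)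
      rw [hgk, Real.dist_eq, Real.dist_eq]
      have hg0 : p.1 ≤ g 0 := hσ0 ▸ le_max_left _ _
      have hgn : q.1 ≤ g (n + 1) := hσn ▸ le_max_left _ _
      linarith [le_abs_self (g 0 - a), neg_le_abs (a - g (n + 1))]
    right
    nlinarith [mul_le_mul_of_nonneg_left hD hh₀.le]
  · push Not at hdip
    have hgτ : V = ∑ i ∈ Finset.range (n + 1), dist (τ i) (τ (i + 1)) :=
      Finset.sum_congr rfl fun i hi => by
        have hi : i ≤ n := Nat.lt_succ_iff.1 (Finset.mem_range.1 hi)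
        simp only [g, max_eq_left (hdip i (by omega)), max_eq_left (hdip (i + 1) (by omega))]
    left
    rw [hgτ] at hsteps
    nlinarith

end LowerBound

section UpperBound

open scoped Interval

variable {X : Type*} [MetricSpace X] {f : ℝ → ℝ} {T : ℝ}

theorem le_inv_of_mem_uIoc {c : ℝ} (hf : ∀ u, 0 < u → c ≤ (f u)⁻¹) {s t : ℝ} (hs : 0 ≤ s)
    (ht : 0 ≤ t) : ∀ u ∈ Ι s t, c ≤ (f u)⁻¹ :=
  fun u hu => hf u ((le_min hs ht).trans_lt hu.1)

theorem WPJoins.le_max_dist (hX : IsLengthSpace X) (hT : 0 < T)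
    (hf : ∀ u, 0 < u → 1 ≤ (f u)⁻¹) {p q : ℝ × X} (hp : p.1 ∈ Set.Icc 0 T)
    (hq : q.1 ∈ Set.Icc 0 T) {η : ℝ} (hη : 0 < η) :
    WPJoins (Set.Icc 0 T) f p q (max |p.1 - q.1| (dist p.2 q.2) + η) := by
  obtain ⟨w, hyw, hwx⟩ := hX.exists_dist_le_dist_le q.2 p.2 (abs_nonneg (q.1 - p.1)) (half_pos hη)
  set t' := if p.1 = 0 then T else 0
  have ht' : t' ∈ Set.Icc 0 T := by
    by_cases h : p.1 = 0 <;> simp [t', h, hT.le]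
  have hpt' : p.1 ≠ t' := by
    by_cases h : p.1 = 0 <;> simp [t', h, hT.ne]
  have level : WPJoins (Set.Icc 0 T) f p (p.1, w) (1⁻¹ * (dist p.2 w + η / 2)) :=
    WPJoins.level hX hp ht' hpt' one_pos (le_inv_of_mem_uIoc hf hp.1 ht'.1) p.2 w (half_pos hη)
  have segment : WPJoins (Set.Icc 0 T) f (p.1, w) q |q.1 - p.1| :=
    .of_dist_le hp hq zero_le_one (le_inv_of_mem_uIoc hf hp.1 hq.1)
      (by rw [one_mul, dist_comm]; exact hyw)
  refine (level.trans segment).mono ?_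
  rw [dist_comm w, abs_sub_comm q.1] at hwx
  rw [inv_one, one_mul, abs_sub_comm q.1]
  have : max (dist q.2 p.2 - |p.1 - q.1|) 0 + |p.1 - q.1| ≤ max |p.1 - q.1| (dist p.2 q.2) := by
    rw [dist_comm, ← max_add_add_right, sub_add_cancel, zero_add, max_comm]
  linarith

theorem WPJoins.le_bottom (hX : IsLengthSpace X) {h₀ b : ℝ} (hh₀ : 0 < h₀) (hb : 0 < b)
    (hbT : b ≤ T) (hf : ∀ u, 0 < u → 1 ≤ (f u)⁻¹) (hfb : ∀ u ∈ Set.Ioc 0 b, h₀⁻¹ ≤ (f u)⁻¹)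
    {p q : ℝ × X} (hp : p.1 ∈ Set.Icc 0 T) (hq : q.1 ∈ Set.Icc 0 T) {η : ℝ} (hη : 0 < η) :
    WPJoins (Set.Icc 0 T) f p q
      (p.1 + q.1 + h₀ * (max (dist p.2 q.2 - p.1 - q.1) 0 + η)) := by
  obtain ⟨x', y', hx', hy', hx'y'⟩ :=
    hX.exists_dist_le_dist_le_dist_le p.2 q.2 hp.1 hq.1 (half_pos hη)
  have h0 : (0 : ℝ) ∈ Set.Icc 0 T := ⟨le_rfl, hb.le.trans hbT⟩
  have down : WPJoins (Set.Icc 0 T) f p (0, x') |0 - p.1| :=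
    .of_dist_le hp h0 zero_le_one (le_inv_of_mem_uIoc hf hp.1 le_rfl)
      (by rwa [one_mul, zero_sub, abs_neg, abs_of_nonneg hp.1])
  have level : WPJoins (Set.Icc 0 T) f (0, x') (0, y') (h₀⁻¹⁻¹ * (dist x' y' + η / 2)) :=
    WPJoins.level hX h0 ⟨hb.le, hbT⟩ hb.ne (inv_pos.2 hh₀) (by rwa [Set.uIoc_of_le hb.le])
      x' y' (half_pos hη)
  have up : WPJoins (Set.Icc 0 T) f (0, y') q |q.1 - 0| :=
    .of_dist_le h0 hq zero_le_one (le_inv_of_mem_uIoc hf le_rfl hq.1)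
      (by rwa [one_mul, sub_zero, abs_of_nonneg hq.1, dist_comm])
  refine ((down.trans level).trans up).mono ?_
  rw [inv_inv, zero_sub, abs_neg, abs_of_nonneg hp.1, sub_zero, abs_of_nonneg hq.1]
  linarith [mul_le_mul_of_nonneg_left hx'y' hh₀.le]

end UpperBound

theorem abs_nullDist_sub_limDist_le {X : Type*} [MetricSpace X] (hX : IsLengthSpace X)
    {f : ℝ → ℝ} {h₀ a b T : ℝ} (hh₀ : 0 < h₀) (hh₀₁ : h₀ ≤ 1) (ha : 0 ≤ a) (hb : 0 < b)
    (hbT : b ≤ T) (hf₁ : ∀ u, 0 < u → 1 ≤ (f u)⁻¹) (hf₀ : ∀ u, 0 < u → (f u)⁻¹ ≤ h₀⁻¹)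
    (hfa : ∀ u, a < u → (f u)⁻¹ ≤ 1) (hfb : ∀ u ∈ Set.Ioc 0 b, h₀⁻¹ ≤ (f u)⁻¹)
    {p q : ℝ × X} (hp : p.1 ∈ Set.Icc 0 T) (hq : q.1 ∈ Set.Icc 0 T) :
    |nullDist (Set.Icc 0 T) f p q - limDist h₀ p q| ≤ 2 * a := by
  have hT : 0 < T := hb.trans_le hbT
  have upper : nullDist (Set.Icc 0 T) f p q ≤ limDist h₀ p q := by
    refine le_of_forall_pos_le_add fun η hη => ?_
    rw [limDist_eq hX h₀ hp.1 hq.1, ← min_add_add_right]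
    refine le_min (nullDist_le (.le_max_dist hX hT hf₁ hp hq hη)) (nullDist_le ?_)
    refine (WPJoins.le_bottom hX hh₀ hb hbT hf₁ hfb hp hq (η := η / h₀) (by positivity)).mono ?_
    rw [mul_add, mul_div_cancel₀ _ hh₀.ne', ← add_assoc]
  have lower : limDist h₀ p q - 2 * a ≤ nullDist (Set.Icc 0 T) f p q := by
    refine le_nullDist (.le_max_dist hX hT hf₁ hp hq one_pos) fun n σ hσ => ?_
    have hlim := limDist_le hX hh₀₁ hp.1 hq.1
    obtain ⟨hΔ, hd | hd⟩ := hσ.lower_bound hh₀ hh₀₁ ha hf₀ hfa fun t ht => ht.1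
    · have := hlim.trans (max_le hΔ ((min_le_left _ _).trans hd))
      linarith
    · have := hlim.trans (max_le (hΔ.trans (le_add_of_nonneg_right (by positivity)))
        ((min_le_right _ _).trans hd))
      linarith
  rw [abs_le]
  constructor <;> linarith

section Warp

variable {h : ℝ → ℝ} {h₀ : ℝ}

theorem warpSeq_eq_of_le (hval : ∀ t ∈ Set.Icc (0 : ℝ) (1 / 2), h t = h₀) {j : ℕ}
    (hj : (0 : ℝ) < j) {u : ℝ} (hu₀ : 0 ≤ u) (hu : u ≤ 1 / (2 * j)) : warpSeq h j u = h₀ := by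
  rw [le_div_iff₀ (by positivity)] at hu
  refine (if_pos ?_).trans (hval _ ⟨by positivity, by linarith⟩)
  rw [le_div_iff₀ hj]
  nlinarith

theorem warpSeq_eq_one (j : ℕ) {u : ℝ} (hu : 1 / (j : ℝ) < u) : warpSeq h j u = 1 :=
  if_neg (not_le.2 hu)

theorem warpSeq_mem_Icc (hh₀ : h₀ ≤ 1) (hmono : MonotoneOn h (Set.Icc 0 1))
    (hval : ∀ t ∈ Set.Icc (0 : ℝ) (1 / 2), h t = h₀) (hle : ∀ t ∈ Set.Icc (0 : ℝ) 1, h t ≤ 1)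
    {j : ℕ} (hj : (0 : ℝ) < j) {u : ℝ} (hu : 0 < u) : warpSeq h j u ∈ Set.Icc h₀ 1 := by
  unfold warpSeq
  split_ifs with hu'
  · rw [le_div_iff₀ hj] at hu'
    have hju : (j : ℝ) * u ∈ Set.Icc 0 1 := ⟨by positivity, by linarith⟩
    refine ⟨?_, hle _ hju⟩
    rw [← hval 0 ⟨le_rfl, by norm_num⟩]
    exact hmono ⟨le_rfl, zero_le_one⟩ hju hju.1
  · exact ⟨hh₀, le_rfl⟩

end Warp

theorem stmt16_general {X : Type*} [MetricSpace X]
    (hX : ∀ x y : X, ∀ ε : ℝ, 0 < ε →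
      ∃ z : X, max (dist x z) (dist z y) ≤ dist x y / 2 + ε)
    (h₀ : ℝ) (hh₀ : 0 < h₀ ∧ h₀ < 1)
    (h : ℝ → ℝ)
    (hmono : MonotoneOn h (Set.Icc 0 1))
    (hval : ∀ t ∈ Set.Icc (0 : ℝ) (1 / 2), h t = h₀)
    (hrange : ∀ t ∈ Set.Icc (0 : ℝ) 1, 0 < h t ∧ h t ≤ 1) :
    ∀ ε : ℝ, 0 < ε → ∃ N : ℕ, ∀ j ≥ N, ∀ p q : ℝ × X,
      p.1 ∈ Set.Icc (0 : ℝ) 2 → q.1 ∈ Set.Icc (0 : ℝ) 2 →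
      |nullDist (Set.Icc 0 2) (warpSeq h j) p q - limDist h₀ p q| ≤ ε := by
  intro ε hε
  refine ⟨⌈2 / ε⌉₊, fun j hj p q hp hq => ?_⟩
  have hjε : 2 / ε ≤ j := (Nat.le_ceil _).trans (Nat.cast_le.2 hj)
  have hj : (0 : ℝ) < j := (by positivity : (0 : ℝ) < 2 / ε).trans_le hjε
  have hprofile : ∀ u, 0 < u → warpSeq h j u ∈ Set.Icc h₀ 1 := fun u hu =>
    warpSeq_mem_Icc hh₀.2.le hmono hval (fun t ht => (hrange t ht).2) hj hu
  refine (abs_nullDist_sub_limDist_le hX hh₀.1 hh₀.2.le (a := 1 / j) (b := 1 / (2 * j))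
    (by positivity) (by positivity) ?_
    (fun u hu => (one_le_inv₀ (hh₀.1.trans_le (hprofile u hu).1)).2 (hprofile u hu).2)
    (fun u hu => inv_anti₀ hh₀.1 (hprofile u hu).1)
    (fun u hu => by rw [warpSeq_eq_one j hu, inv_one])
    (fun u hu => by rw [warpSeq_eq_of_le hval hj hu.1.le hu.2]) hp hq).trans ?_
  · rw [div_le_iff₀ (by positivity)]
    nlinarith [(Nat.one_le_cast.2 (Nat.cast_pos.1 hj) : (1 : ℝ) ≤ j)]
  · rw [div_le_iff₀ hε] at hjε
    rw [mul_one_div, div_le_iff₀ hj]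
    linarith

/-- pointwise convergence of the warping functions is not enough: for the
warping functions `f_j` built from `h` with `h ≡ h₀ ∈ (0,1)` on `[0,1/2]`, `h(1) = 1`, the
null distances of `[0,2] ×_{f_j} X` converge uniformly to the distance `d₀ ≠ d̂_σ`. -/
theorem stmt16 {X : Type*} [MetricSpace X] [CompactSpace X]
    (hX : ∀ x y : X, ∀ ε : ℝ, 0 < ε →
      ∃ z : X, max (dist x z) (dist z y) ≤ dist x y / 2 + ε)
    (h₀ : ℝ) (hh₀ : 0 < h₀ ∧ h₀ < 1)
    (h : ℝ → ℝ)
    (hcont : ContinuousOn h (Set.Icc 0 1))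
    (hmono : MonotoneOn h (Set.Icc 0 1))
    (hval : ∀ t ∈ Set.Icc (0 : ℝ) (1 / 2), h t = h₀)
    (hone : h 1 = 1)
    (hrange : ∀ t ∈ Set.Icc (0 : ℝ) 1, 0 < h t ∧ h t ≤ 1) :
    ∀ ε : ℝ, 0 < ε → ∃ N : ℕ, ∀ j ≥ N, ∀ p q : ℝ × X,
      p.1 ∈ Set.Icc (0 : ℝ) 2 → q.1 ∈ Set.Icc (0 : ℝ) 2 →
      |nullDist (Set.Icc 0 2) (warpSeq h j) p q - limDist h₀ p q| ≤ ε :=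
  stmt16_general hX h₀ hh₀ h hmono hval hrange
end
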